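/- arXiv:1508.04992 — 4 statements merged into one kernel-verified Lean document; each statement's English description precedes it below -/
import Mathlib

section
/- Let T be an ε-critical tournament with n vertices, and let ε, c, f > 0 satisfy ε < log_c(1-f) (with 0 < c, f < 1). Then for every vertex subset A with |A| ≥ cn and every transitive subtournament G of T with |G| ≥ f·tr(T), the set A is not complete from V(G) and A is not complete to V(G) (i.e., it is not the case that every vertex of G beats every vertex of A, nor that every vertex of A beats every vertex of G). -/
/-- A tournament: irreflexive, and exactly one direction between distinct vertices. -/
def IsTournament {V : Type*} (r : V → V → Prop) : Prop :=
  (∀ v, ¬ r v v) ∧ ∀ u v : V, u ≠ v → (r u v ↔ ¬ r v u)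

/-- A vertex set inducing a transitive subtournament. -/
def TransSub {V : Type*} (r : V → V → Prop) (S : Finset V) : Prop :=
  ∀ a ∈ S, ∀ b ∈ S, ∀ c ∈ S, r a b → r b c → r a c

/-- Largest size of a transitive subtournament contained in `A`. -/
noncomputable def trOn {V : Type*} (r : V → V → Prop) (A : Finset V) : ℕ :=
  sSup {k | ∃ S ⊆ A, TransSub r S ∧ S.card = k}

/-- tr(T): largest size of a transitive subtournament. -/
noncomputable def trT (V : Type*) [Fintype V] (r : V → V → Prop) : ℕ :=
  trOn r Finset.univ

/-- ε-critical: tr(T) < |T|^ε, but every proper subtournament S has tr(S) ≥ |S|^ε. -/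
def EpsCritical (V : Type*) [Fintype V] (r : V → V → Prop) (ε : ℝ) : Prop :=
  ((trT V r : ℝ) < (Fintype.card V : ℝ) ^ ε) ∧
  ∀ A : Finset V, A ⊂ Finset.univ → ((A.card : ℝ) ^ ε ≤ (trOn r A : ℝ))

/-!
If a transitive `G` is complete to `A` (or from `A`), then `G` and `A` are disjoint and `G`
together with a largest transitive subset of `A` is transitive, so `tr(T) ≥ |G| + tr(A)`.
Criticality makes `A` (a proper subset, since it misses `G`) large in the sense
`tr(A) ≥ |A|^ε ≥ c^ε n^ε`, and `ε < log_c (1 - f)` means `c^ε > 1 - f`. Hence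
`tr(T) ≥ f·tr(T) + c^ε n^ε > f·tr(T) + (1 - f)·tr(T) = tr(T)`, using `tr(T) < n^ε`.
-/

variable {V : Type*} {r : V → V → Prop}

def IsCompleteTo (r : V → V → Prop) (X Y : Finset V) : Prop :=
  ∀ x ∈ X, ∀ y ∈ Y, r x y

theorem IsCompleteTo.disjoint (hirr : ∀ v, ¬ r v v) {X Y : Finset V}
    (h : IsCompleteTo r X Y) : Disjoint X Y :=
  Finset.disjoint_left.mpr fun v hX hY => hirr v (h v hX v hY)

theorem disjoint_of_isCompleteTo_or (hirr : ∀ v, ¬ r v v) {X Y : Finset V}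
    (h : IsCompleteTo r X Y ∨ IsCompleteTo r Y X) : Disjoint X Y :=
  h.elim (·.disjoint hirr) (·.disjoint hirr |>.symm)

theorem TransSub.union_of_isCompleteTo [DecidableEq V] (hT : IsTournament r) {X Y : Finset V}
    (hX : TransSub r X) (hY : TransSub r Y) (hXY : IsCompleteTo r X Y) :
    TransSub r (X ∪ Y) := by
  have hback : ∀ x ∈ X, ∀ y ∈ Y, ¬ r y x := fun x hx y hy =>
    (hT.2 x y fun hxy => hT.1 x (hXY x hx x (hxy ▸ hy))).mp (hXY x hx y hy)
  intro a ha b hb c hc hab hbc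
  rw [Finset.mem_union] at ha hb hc
  rcases ha with ha | ha <;> rcases hb with hb | hb <;> rcases hc with hc | hc
  · exact hX a ha b hb c hc hab hbc
  · exact hXY a ha c hc
  · exact absurd hbc (hback c hc b hb)
  · exact hXY a ha c hc
  · exact absurd hab (hback b hb a ha)
  · exact absurd hab (hback b hb a ha)
  · exact absurd hbc (hback c hc b hb)
  · exact hY a ha b hb c hc hab hbc

theorem bddAbove_card_transSub (r : V → V → Prop) (A : Finset V) :
    BddAbove {k | ∃ S ⊆ A, TransSub r S ∧ S.card = k} :=
  ⟨A.card, by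
    rintro _ ⟨S, hSA, -, rfl⟩
    exact Finset.card_le_card hSA⟩

theorem exists_transSub_card_eq_trOn (r : V → V → Prop) (A : Finset V) :
    ∃ S ⊆ A, TransSub r S ∧ S.card = trOn r A :=
  Nat.sSup_mem (s := {k | ∃ S ⊆ A, TransSub r S ∧ S.card = k})
    ⟨0, ∅, Finset.empty_subset A, by simp [TransSub], Finset.card_empty⟩
    (bddAbove_card_transSub r A)

theorem card_le_trOn {A S : Finset V} (hSA : S ⊆ A) (hS : TransSub r S) :
    S.card ≤ trOn r A :=
  le_csSup (bddAbove_card_transSub r A) ⟨S, hSA, hS, rfl⟩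

theorem one_le_trT [Fintype V] [Nonempty V] (r : V → V → Prop) : 1 ≤ trT V r := by
  obtain ⟨v⟩ := ‹Nonempty V›
  simpa [trT] using card_le_trOn (r := r) (Finset.subset_univ {v}) (by simp [TransSub])

theorem card_add_trOn_le_trT [Fintype V] [DecidableEq V] (hT : IsTournament r)
    {G A : Finset V} (hG : TransSub r G)
    (hGA : IsCompleteTo r G A ∨ IsCompleteTo r A G) :
    G.card + trOn r A ≤ trT V r := by
  obtain ⟨S, hSA, hS, hScard⟩ := exists_transSub_card_eq_trOn r A
  have hGS : IsCompleteTo r G S ∨ IsCompleteTo r S G := hGA.imp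
    (fun h g hg s hs => h g hg s (hSA hs)) (fun h s hs g hg => h s (hSA hs) g hg)
  have hunion : TransSub r (G ∪ S) := by
    rcases hGS with h | h
    · exact hG.union_of_isCompleteTo hT hS h
    · exact Finset.union_comm S G ▸ hS.union_of_isCompleteTo hT hG h
  rw [← hScard, ← Finset.card_union_of_disjoint (disjoint_of_isCompleteTo_or hT.1 hGS)]
  exact card_le_trOn (Finset.subset_univ _) hunion

theorem EpsCritical.nonempty [Fintype V] {ε : ℝ} (hcrit : EpsCritical V r ε) (hε : 0 < ε) :
    Nonempty V := by
  by_contra hV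
  have := hcrit.1
  rw [Fintype.card_eq_zero_iff.mpr (not_nonempty_iff.mp hV), Nat.cast_zero,
    Real.zero_rpow hε.ne'] at this
  exact (Nat.cast_nonneg _).not_gt this

theorem EpsCritical.not_isCompleteTo [Fintype V] {ε c f : ℝ}
    (hT : IsTournament r) (hcrit : EpsCritical V r ε)
    (hε : 0 < ε) (hc : 0 < c) (hc1 : c < 1) (hf : 0 < f) (hf1 : f < 1)
    (hlog : ε < Real.logb c (1 - f))
    {A G : Finset V} (hA : c * (Fintype.card V : ℝ) ≤ A.card)
    (hG : TransSub r G) (hGcard : f * (trT V r : ℝ) ≤ G.card) :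
    ¬ (IsCompleteTo r G A ∨ IsCompleteTo r A G) := by
  classical
  intro hGA
  have : Nonempty V := hcrit.nonempty hε
  obtain ⟨g, hg⟩ : G.Nonempty := by
    rw [← Finset.card_pos, ← Nat.cast_pos (α := ℝ)]
    have : (1 : ℝ) ≤ trT V r := by exact_mod_cast one_le_trT r
    nlinarith
  have hAproper : A ⊂ Finset.univ := Finset.ssubset_univ_iff.mpr fun hA =>
    (disjoint_of_isCompleteTo_or hT.1 hGA).notMem_of_mem_left_finset hg (hA ▸ Finset.mem_univ g)
  have hsum : (G.card : ℝ) + trOn r A ≤ trT V r := by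
    exact_mod_cast card_add_trOn_le_trT hT hG hGA
  have hcε : 1 - f < c ^ ε :=
    (Real.lt_logb_iff_rpow_lt_of_base_lt_one hc hc1 (by linarith)).mp hlog
  have htrA : (1 - f) * trT V r < trOn r A := calc
    (1 - f) * trT V r < (1 - f) * (Fintype.card V : ℝ) ^ ε :=
      mul_lt_mul_of_pos_left hcrit.1 (by linarith)
    _ ≤ c ^ ε * (Fintype.card V : ℝ) ^ ε :=
      mul_le_mul_of_nonneg_right hcε.le (Real.rpow_nonneg (Nat.cast_nonneg _) ε)
    _ = (c * Fintype.card V) ^ ε := (Real.mul_rpow hc.le (Nat.cast_nonneg _)).symm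
    _ ≤ (A.card : ℝ) ^ ε := Real.rpow_le_rpow (by positivity) hA hε.le
    _ ≤ trOn r A := hcrit.2 A hAproper
  linarith

theorem stmt1 {V : Type} [Fintype V] (r : V → V → Prop) (ε c f : ℝ)
    (hT : IsTournament r) (hcrit : EpsCritical V r ε)
    (hε : 0 < ε) (hc : 0 < c) (hc1 : c < 1) (hf : 0 < f) (hf1 : f < 1)
    (hlog : ε < Real.logb c (1 - f)) :
    ∀ A : Finset V, c * (Fintype.card V : ℝ) ≤ (A.card : ℝ) →
    ∀ G : Finset V, TransSub r G → f * (trT V r : ℝ) ≤ (G.card : ℝ) →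
      (¬ ∀ g ∈ G, ∀ a ∈ A, r g a) ∧ (¬ ∀ a ∈ A, ∀ g ∈ G, r a g) :=
  fun _ hA _ hG hGcard =>
    not_or.mp (hcrit.not_isCompleteTo hT hε hc hc1 hf hf1 hlog hA hG hGcard)
end

section
/- Let T be an ε-critical tournament with n vertices and let ε, c > 0 with ε < log_{c/2}(1/2). Then for every two disjoint vertex subsets X, Y with |X| ≥ cn and |Y| ≥ cn, there exist an integer k ≥ cn/2 and distinct vertices x_1,...,x_k ∈ X and y_1,...,y_k ∈ Y such that (y_i, x_i) is an edge for each i (i.e., there is a matching of size at least cn/2 of edges directed from Y to X). -/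
lemma trOn_bdd {V : Type*} (r : V → V → Prop) (A : Finset V) :
    BddAbove {k | ∃ S ⊆ A, TransSub r S ∧ S.card = k} := by
  refine ⟨A.card, fun k hk => ?_⟩
  obtain ⟨S, hS, _, hc⟩ := hk
  exact hc ▸ Finset.card_le_card hS

lemma le_trOn {V : Type*} (r : V → V → Prop) (A : Finset V) {S : Finset V}
    (hS : S ⊆ A) (ht : TransSub r S) : S.card ≤ trOn r A :=
  le_csSup (trOn_bdd r A) ⟨S, hS, ht, rfl⟩

lemma trOn_exists {V : Type*} (r : V → V → Prop) (A : Finset V) :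
    ∃ S ⊆ A, TransSub r S ∧ S.card = trOn r A := by
  have hne : {k | ∃ S ⊆ A, TransSub r S ∧ S.card = k}.Nonempty :=
    ⟨0, ∅, Finset.empty_subset A, by simp [TransSub], Finset.card_empty⟩
  exact Nat.sSup_mem hne (trOn_bdd r A)

theorem stmt2 {V : Type} [Fintype V] (r : V → V → Prop) (ε c : ℝ)
    (hT : IsTournament r) (hcrit : EpsCritical V r ε)
    (hε : 0 < ε) (hc : 0 < c) (hlog : ε < Real.logb (c / 2) (1 / 2)) :
    ∀ X Y : Finset V, Disjoint X Y →
      c * (Fintype.card V : ℝ) ≤ (X.card : ℝ) →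
      c * (Fintype.card V : ℝ) ≤ (Y.card : ℝ) →
      ∃ (k : ℕ) (x y : Fin k → V),
        c * (Fintype.card V : ℝ) / 2 ≤ (k : ℝ) ∧
        Function.Injective x ∧ Function.Injective y ∧
        ∀ i : Fin k, x i ∈ X ∧ y i ∈ Y ∧ r (y i) (x i) := by
  intro X Y hXY hX hY
  classical
  by_cases hn0 : Fintype.card V = 0
  · exact ⟨0, fun i => i.elim0, fun i => i.elim0, by simp [hn0],
      fun i => i.elim0, fun i => i.elim0, fun i => i.elim0⟩
  set n : ℝ := (Fintype.card V : ℝ) with hn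
  have hn1 : (1 : ℝ) ≤ n := by
    rw [hn]
    exact_mod_cast Nat.one_le_iff_ne_zero.mpr hn0
  have hnpos : (0 : ℝ) < n := lt_of_lt_of_le one_pos hn1
  -- c/2 < 1 and (c/2)^ε > 1/2
  have hc2 : c / 2 < 1 := by
    by_contra h
    push_neg at h
    have h1 : Real.logb (c / 2) (1 / 2) ≤ 0 := by
      rw [Real.logb]
      apply div_nonpos_of_nonpos_of_nonneg
      · exact Real.log_nonpos (by norm_num) (by norm_num)
      · exact Real.log_nonneg h
    linarith
  have hc2pos : (0 : ℝ) < c / 2 := by linarith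
  have hhalf : (1 : ℝ) / 2 < (c / 2) ^ ε := by
    have hlc : Real.log (c / 2) < 0 := Real.log_neg hc2pos hc2
    rw [Real.logb] at hlog
    have h2 : Real.log (1 / 2) < ε * Real.log (c / 2) :=
      (lt_div_iff_of_neg hlc).mp hlog
    have : Real.exp (Real.log (1 / 2)) < Real.exp (Real.log (c / 2) * ε) := by
      apply Real.exp_lt_exp.mpr
      linarith [h2]
    rwa [Real.exp_log (by norm_num : (0:ℝ) < 1/2), ← Real.rpow_def_of_pos hc2pos] at this
  -- maximum matching
  set MS : Set ℕ := {k | ∃ M : Finset (V × V),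
    (∀ p ∈ M, p.1 ∈ X ∧ p.2 ∈ Y ∧ r p.2 p.1) ∧
    Set.InjOn (Prod.fst : V × V → V) ↑M ∧ Set.InjOn (Prod.snd : V × V → V) ↑M ∧
    M.card = k} with hMS
  have hMSbdd : BddAbove MS := by
    refine ⟨Fintype.card (V × V), fun k hk => ?_⟩
    obtain ⟨M, _, _, _, hcard⟩ := hk
    exact hcard ▸ Finset.card_le_univ M
  have h0MS : 0 ∈ MS := ⟨∅, by simp, by simp, by simp, Finset.card_empty⟩
  have hMSne : MS.Nonempty := ⟨0, h0MS⟩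
  obtain ⟨M, hMmem, hMfst, hMsnd, hMcard⟩ := Nat.sSup_mem hMSne hMSbdd
  set k := sSup MS with hk
  have hmax : ∀ M' : Finset (V × V),
      (∀ p ∈ M', p.1 ∈ X ∧ p.2 ∈ Y ∧ r p.2 p.1) →
      Set.InjOn (Prod.fst : V × V → V) ↑M' → Set.InjOn (Prod.snd : V × V → V) ↑M' →
      M'.card ≤ k :=
    fun M' h1 h2 h3 => le_csSup hMSbdd ⟨M', h1, h2, h3, rfl⟩
  rcases le_or_gt (c * n / 2) (k : ℝ) with hkge | hklt
  · -- build the functions from M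
    refine ⟨M.card, fun i => ((M.equivFin.symm i) : V × V).1,
      fun i => ((M.equivFin.symm i) : V × V).2, by rw [hMcard]; exact hkge, ?_, ?_, ?_⟩
    · intro i j hij
      have h1 : ((M.equivFin.symm i) : V × V) = ((M.equivFin.symm j) : V × V) :=
        hMfst (M.equivFin.symm i).2 (M.equivFin.symm j).2 hij
      have := Subtype.ext h1
      simpa using M.equivFin.symm.injective this
    · intro i j hij
      have h1 : ((M.equivFin.symm i) : V × V) = ((M.equivFin.symm j) : V × V) :=
        hMsnd (M.equivFin.symm i).2 (M.equivFin.symm j).2 hij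
      have := Subtype.ext h1
      simpa using M.equivFin.symm.injective this
    · intro i
      exact hMmem _ (M.equivFin.symm i).2
  · exfalso
    set X' : Finset V := X \ M.image Prod.fst with hX'def
    set Y' : Finset V := Y \ M.image Prod.snd with hY'def
    have hX'card : c * n / 2 ≤ (X'.card : ℝ) := by
      have h1 : X.card ≤ X'.card + (M.image Prod.fst).card :=
        Finset.card_le_card_sdiff_add_card
      have h2 : (M.image Prod.fst).card ≤ M.card := Finset.card_image_le
      have : (X.card : ℝ) ≤ (X'.card : ℝ) + (M.card : ℝ) := by
        exact_mod_cast h1.trans (by omega)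
      rw [hMcard] at this
      linarith
    have hY'card : c * n / 2 ≤ (Y'.card : ℝ) := by
      have h1 : Y.card ≤ Y'.card + (M.image Prod.snd).card :=
        Finset.card_le_card_sdiff_add_card
      have h2 : (M.image Prod.snd).card ≤ M.card := Finset.card_image_le
      have : (Y.card : ℝ) ≤ (Y'.card : ℝ) + (M.card : ℝ) := by
        exact_mod_cast h1.trans (by omega)
      rw [hMcard] at this
      linarith
    have hcn2pos : (0 : ℝ) < c * n / 2 := by positivity
    -- no edge from Y' to X'
    have hne : ∀ x ∈ X', ∀ y ∈ Y', ¬ r y x := by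
      intro x hx y hy hryx
      have hxX : x ∈ X := (Finset.mem_sdiff.mp hx).1
      have hxnf : x ∉ M.image Prod.fst := (Finset.mem_sdiff.mp hx).2
      have hyY : y ∈ Y := (Finset.mem_sdiff.mp hy).1
      have hyns : y ∉ M.image Prod.snd := (Finset.mem_sdiff.mp hy).2
      have hpnot : (x, y) ∉ M := fun h =>
        hxnf (Finset.mem_image.mpr ⟨(x, y), h, rfl⟩)
      have hxnf' : x ∉ Prod.fst '' (↑M : Set (V × V)) := by
        rw [← Finset.coe_image]; exact_mod_cast hxnf
      have hyns' : y ∉ Prod.snd '' (↑M : Set (V × V)) := by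
        rw [← Finset.coe_image]; exact_mod_cast hyns
      have hcard' : (insert (x, y) M).card ≤ k := by
        apply hmax
        · intro p hp
          rcases Finset.mem_insert.mp hp with h | h
          · subst h; exact ⟨hxX, hyY, hryx⟩
          · exact hMmem p h
        · rw [Finset.coe_insert]
          exact (Set.injOn_insert (by exact_mod_cast hpnot)).mpr ⟨hMfst, hxnf'⟩
        · rw [Finset.coe_insert]
          exact (Set.injOn_insert (by exact_mod_cast hpnot)).mpr ⟨hMsnd, hyns'⟩
      rw [Finset.card_insert_of_notMem hpnot, hMcard] at hcard'
      omega
    -- all edges go from X' to Y'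
    have hdir : ∀ x ∈ X', ∀ y ∈ Y', r x y := by
      intro x hx y hy
      have hxX : x ∈ X := (Finset.mem_sdiff.mp hx).1
      have hyY : y ∈ Y := (Finset.mem_sdiff.mp hy).1
      have hxy : x ≠ y := fun h => (Finset.disjoint_left.mp hXY hxX) (h ▸ hyY)
      exact (hT.2 x y hxy).mpr (hne x hx y hy)
    -- nonemptiness
    have hX'ne : X'.Nonempty := by
      rw [← Finset.card_pos]
      by_contra h
      push_neg at h
      interval_cases hcc : X'.card
      · simp [hcc] at hX'card; linarith
    have hY'ne : Y'.Nonempty := by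
      rw [← Finset.card_pos]
      by_contra h
      push_neg at h
      interval_cases hcc : Y'.card
      · simp [hcc] at hY'card; linarith
    obtain ⟨u, hu⟩ := hX'ne
    obtain ⟨v, hv⟩ := hY'ne
    have hX'ss : X' ⊂ Finset.univ := by
      rw [Finset.ssubset_univ_iff]
      intro h
      have : v ∈ X' := h ▸ Finset.mem_univ v
      exact (Finset.disjoint_left.mp hXY (Finset.mem_sdiff.mp this).1)
        (Finset.mem_sdiff.mp hv).1
    have hY'ss : Y' ⊂ Finset.univ := by
      rw [Finset.ssubset_univ_iff]
      intro h
      have : u ∈ Y' := h ▸ Finset.mem_univ u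
      exact (Finset.disjoint_left.mp hXY (Finset.mem_sdiff.mp hu).1)
        (Finset.mem_sdiff.mp this).1
    obtain ⟨S₁, hS₁sub, hS₁tr, hS₁card⟩ := trOn_exists r X'
    obtain ⟨S₂, hS₂sub, hS₂tr, hS₂card⟩ := trOn_exists r Y'
    have hS₁big : (X'.card : ℝ) ^ ε ≤ (S₁.card : ℝ) := hS₁card ▸ hcrit.2 X' hX'ss
    have hS₂big : (Y'.card : ℝ) ^ ε ≤ (S₂.card : ℝ) := hS₂card ▸ hcrit.2 Y' hY'ss
    -- union is transitive
    have hUtr : TransSub r (S₁ ∪ S₂) := by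
      intro a ha b hb cc hc hab hbc
      have hd : ∀ p ∈ S₁, ∀ q ∈ S₂, r p q := fun p hp q hq =>
        hdir p (hS₁sub hp) q (hS₂sub hq)
      have hnd : ∀ p ∈ S₁, ∀ q ∈ S₂, ¬ r q p := fun p hp q hq =>
        hne p (hS₁sub hp) q (hS₂sub hq)
      rcases Finset.mem_union.mp ha with ha1 | ha2 <;>
        rcases Finset.mem_union.mp hb with hb1 | hb2 <;>
        rcases Finset.mem_union.mp hc with hc1 | hc2
      · exact hS₁tr a ha1 b hb1 cc hc1 hab hbc
      · exact hd a ha1 cc hc2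
      · exact absurd hbc (hnd cc hc1 b hb2)
      · exact hd a ha1 cc hc2
      · exact absurd hab (hnd b hb1 a ha2)
      · exact absurd hab (hnd b hb1 a ha2)
      · exact absurd hbc (hnd cc hc1 b hb2)
      · exact hS₂tr a ha2 b hb2 cc hc2 hab hbc
    have hUdisj : Disjoint S₁ S₂ := by
      apply Finset.disjoint_left.mpr
      intro a ha1 ha2
      exact (Finset.disjoint_left.mp hXY (Finset.mem_sdiff.mp (hS₁sub ha1)).1)
        (Finset.mem_sdiff.mp (hS₂sub ha2)).1
    have hUcard : (S₁ ∪ S₂).card = S₁.card + S₂.card :=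
      Finset.card_union_of_disjoint hUdisj
    have hUle : ((S₁ ∪ S₂).card : ℕ) ≤ trT V r :=
      le_trOn r Finset.univ (Finset.subset_univ _) hUtr
    -- numeric contradiction
    have h1 : (c * n / 2) ^ ε ≤ (X'.card : ℝ) ^ ε :=
      Real.rpow_le_rpow (le_of_lt hcn2pos) hX'card (le_of_lt hε)
    have h2 : (c * n / 2) ^ ε ≤ (Y'.card : ℝ) ^ ε :=
      Real.rpow_le_rpow (le_of_lt hcn2pos) hY'card (le_of_lt hε)
    have hsplit : (c * n / 2) ^ ε = (c / 2) ^ ε * n ^ ε := by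
      rw [show c * n / 2 = (c / 2) * n by ring,
        Real.mul_rpow (le_of_lt hc2pos) (le_of_lt hnpos)]
    have hnpow : (0 : ℝ) < n ^ ε := Real.rpow_pos_of_pos hnpos ε
    have hbig : n ^ ε < 2 * (c * n / 2) ^ ε := by
      rw [hsplit]
      nlinarith [hhalf, hnpow]
    have htrlt : (trT V r : ℝ) < n ^ ε := hcrit.1
    have hUreal : ((S₁ ∪ S₂).card : ℝ) ≤ (trT V r : ℝ) := by exact_mod_cast hUle
    rw [hUcard] at hUreal
    push_cast at hUreal
    linarith
end

section
/- Let H be a 6-vertex tournament containing a vertex v with 4 outneighbors a,b,c,d and one inneighbor u, where u is adjacent to a,b,c and adjacent from d, the triple {a,b,c} forms a cyclic triangle with edges (a,b),(b,c),(c,a), and d has at most one outneighbor in {a,b,c}. Then H admits a galaxy ordering of its vertices. -/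
set_option maxRecDepth 10000


/-- `θ` is a galaxy ordering of the tournament `r`: there is a collection of stars
(each given by its center and a nonempty set of leaves), with pairwise disjoint
vertex sets, whose center-leaf pairs are exactly the backward edges under `θ`
(so every component of the backward-edge graph is a singleton or a star);
each star is a left star (center before all leaves) or a right star (center after
all leaves), and no center of a star lies between two leaves of another star. -/
def IsGalaxyOrdering {V : Type*} {n : ℕ} (r : V → V → Prop) (θ : Fin n ≃ V) : Prop :=
  ∃ SS : Finset (Fin n × Finset (Fin n)),
    (∀ s ∈ SS, s.2.Nonempty ∧ s.1 ∉ s.2 ∧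
      ((∀ l ∈ s.2, l < s.1) ∨ (∀ l ∈ s.2, s.1 < l))) ∧
    (∀ s ∈ SS, ∀ t ∈ SS, s ≠ t → Disjoint (insert s.1 s.2) (insert t.1 t.2)) ∧
    (∀ i j : Fin n, i < j →
      (r (θ j) (θ i) ↔ ∃ s ∈ SS, (s.1 = i ∧ j ∈ s.2) ∨ (s.1 = j ∧ i ∈ s.2))) ∧
    (∀ s ∈ SS, ∀ t ∈ SS, s ≠ t →
      ¬ ∃ l1 ∈ t.2, ∃ l2 ∈ t.2, l1 < s.1 ∧ s.1 < l2)

/-- A galaxy: a tournament admitting a galaxy ordering. -/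
def IsGalaxy (V : Type*) [Fintype V] (r : V → V → Prop) : Prop :=
  ∃ θ : Fin (Fintype.card V) ≃ V, IsGalaxyOrdering r θ

lemma galaxyOrdering_congr {V : Type} (r : V → V → Prop) {m n : ℕ} (h : m = n)
    (e : Fin n ≃ V) (hg : IsGalaxyOrdering r e) :
    IsGalaxyOrdering r ((finCongr h).trans e) := by
  subst h
  simpa using hg

lemma inj6 {V : Type} (x0 x1 x2 x3 x4 x5 : V)
    (h01 : x0 ≠ x1) (h02 : x0 ≠ x2) (h03 : x0 ≠ x3) (h04 : x0 ≠ x4) (h05 : x0 ≠ x5)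
    (h12 : x1 ≠ x2) (h13 : x1 ≠ x3) (h14 : x1 ≠ x4) (h15 : x1 ≠ x5)
    (h23 : x2 ≠ x3) (h24 : x2 ≠ x4) (h25 : x2 ≠ x5)
    (h34 : x3 ≠ x4) (h35 : x3 ≠ x5)
    (h45 : x4 ≠ x5) :
    Function.Injective ![x0,x1,x2,x3,x4,x5] := by
  have e5 : (![x0,x1,x2,x3,x4,x5]) (5 : Fin 6) = x5 := rfl
  intro i j h
  fin_cases i <;> fin_cases j <;> simp_all [Matrix.cons_val_succ, e5]

/-- Key lemma: an ordering `x0,…,x5` whose backward edges are exactly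
`(5,0), (5,3), (4,2)` is a galaxy ordering (stars `(5,{0,3})` and `(4,{2})`). -/
lemma key3 {V : Type} [Fintype V] [DecidableEq V] (r : V → V → Prop)
    (h6 : Fintype.card V = 6) (x0 x1 x2 x3 x4 x5 : V)
    (hinj : Function.Injective ![x0,x1,x2,x3,x4,x5])
    (b50 : r x5 x0) (b53 : r x5 x3) (b42 : r x4 x2)
    (n10 : ¬ r x1 x0) (n20 : ¬ r x2 x0) (n30 : ¬ r x3 x0) (n40 : ¬ r x4 x0)
    (n21 : ¬ r x2 x1) (n31 : ¬ r x3 x1) (n41 : ¬ r x4 x1) (n51 : ¬ r x5 x1)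
    (n32 : ¬ r x3 x2) (n52 : ¬ r x5 x2)
    (n43 : ¬ r x4 x3)
    (n54 : ¬ r x5 x4) : IsGalaxy V r := by
  have hbij : Function.Bijective ![x0,x1,x2,x3,x4,x5] :=
    (Fintype.bijective_iff_injective_and_card _).mpr ⟨hinj, by simp [h6]⟩
  refine ⟨(finCongr h6).trans (Equiv.ofBijective _ hbij),
    galaxyOrdering_congr r h6 _ ?_⟩
  refine ⟨{(5, {0, 3}), (4, {2})}, by decide, by decide, ?_, by decide⟩
  intro i j hij
  have e5 : (![x0,x1,x2,x3,x4,x5]) (5 : Fin 6) = x5 := rfl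
  fin_cases i <;> fin_cases j <;>
    simp_all [Equiv.ofBijective, Matrix.cons_val_succ, e5]

/-- Key lemma: an ordering `x0,…,x5` whose backward edges are exactly
`(5,0), (4,2)` is a galaxy ordering (stars `(5,{0})` and `(4,{2})`). -/
lemma key2 {V : Type} [Fintype V] [DecidableEq V] (r : V → V → Prop)
    (h6 : Fintype.card V = 6) (x0 x1 x2 x3 x4 x5 : V)
    (hinj : Function.Injective ![x0,x1,x2,x3,x4,x5])
    (b50 : r x5 x0) (b42 : r x4 x2)
    (n10 : ¬ r x1 x0) (n20 : ¬ r x2 x0) (n30 : ¬ r x3 x0) (n40 : ¬ r x4 x0)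
    (n21 : ¬ r x2 x1) (n31 : ¬ r x3 x1) (n41 : ¬ r x4 x1) (n51 : ¬ r x5 x1)
    (n32 : ¬ r x3 x2) (n52 : ¬ r x5 x2)
    (n43 : ¬ r x4 x3) (n53 : ¬ r x5 x3)
    (n54 : ¬ r x5 x4) : IsGalaxy V r := by
  have hbij : Function.Bijective ![x0,x1,x2,x3,x4,x5] :=
    (Fintype.bijective_iff_injective_and_card _).mpr ⟨hinj, by simp [h6]⟩
  refine ⟨(finCongr h6).trans (Equiv.ofBijective _ hbij),
    galaxyOrdering_congr r h6 _ ?_⟩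
  refine ⟨{(5, {0}), (4, {2})}, by decide, by decide, ?_, by decide⟩
  intro i j hij
  have e5 : (![x0,x1,x2,x3,x4,x5]) (5 : Fin 6) = x5 := rfl
  fin_cases i <;> fin_cases j <;>
    simp_all [Equiv.ofBijective, Matrix.cons_val_succ, e5]

lemma no_dup6 {V : Type} [DecidableEq V] (v u a b c x : V)
    (hx : x ∈ ({v,u,a,b,c} : Finset V))
    (hcard : ({v,u,a,b,c,x} : Finset V).card = 6) : False := by
  have h1 : ({v, u, a, b, c, x} : Finset V) ⊆ {v,u,a,b,c} := by
    intro y hy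
    simp only [Finset.mem_insert, Finset.mem_singleton] at hy hx ⊢
    rcases hx with rfl | rfl | rfl | rfl | rfl <;> tauto
  have h2 := Finset.card_le_card h1
  have h3 := Finset.card_insert_le v ({u,a,b,c} : Finset V)
  have h4 := Finset.card_insert_le u ({a,b,c} : Finset V)
  have h5 := Finset.card_insert_le a ({b,c} : Finset V)
  have h6 := Finset.card_insert_le b ({c} : Finset V)
  have h7 : ({c} : Finset V).card = 1 := rfl
  omega

lemma IsTournament.flip {V : Type*} {r : V → V → Prop} (hT : IsTournament r)
    {x y : V} (h : r x y) : ¬ r y x := by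
  have hxy : x ≠ y := by rintro rfl; exact hT.1 _ h
  exact (hT.2 x y hxy).mp h

theorem stmt9 {V : Type} [Fintype V] [DecidableEq V] (r : V → V → Prop)
    (hT : IsTournament r) (h6 : Fintype.card V = 6)
    (v u a b c d : V)
    (huniv : ({v, u, a, b, c, d} : Finset V) = Finset.univ)
    (hcard : ({v, u, a, b, c, d} : Finset V).card = 6)
    -- v has the four outneighbors a,b,c,d and the inneighbor u
    (hva : r v a) (hvb : r v b) (hvc : r v c) (hvd : r v d) (huv : r u v)
    -- u is adjacent to a,b,c and adjacent from d
    (hua : r u a) (hub : r u b) (huc : r u c) (hdu : r d u)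
    -- {a,b,c} is a cyclic triangle
    (hab : r a b) (hbc : r b c) (hca : r c a)
    -- d has at most one outneighbor in {a,b,c}
    (hd1 : ¬ ((r d a ∧ r d b) ∨ (r d a ∧ r d c) ∨ (r d b ∧ r d c))) :
    IsGalaxy V r := by
  -- distinctness coming from edges
  have ne_of : ∀ {x y : V}, r x y → x ≠ y := by
    rintro x y h rfl; exact hT.1 _ h
  have nvu : v ≠ u := (ne_of huv).symm
  have nva : v ≠ a := ne_of hva
  have nvb : v ≠ b := ne_of hvb
  have nvc : v ≠ c := ne_of hvc
  have nvd : v ≠ d := ne_of hvd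
  have nua : u ≠ a := ne_of hua
  have nub : u ≠ b := ne_of hub
  have nuc : u ≠ c := ne_of huc
  have nud : u ≠ d := (ne_of hdu).symm
  have nab : a ≠ b := ne_of hab
  have nbc : b ≠ c := ne_of hbc
  have nca : c ≠ a := ne_of hca
  -- distinctness from the cardinality hypothesis
  have nad : a ≠ d := by
    intro h; rw [← h] at hcard; exact no_dup6 v u a b c a (by simp) hcard
  have nbd : b ≠ d := by
    intro h; rw [← h] at hcard; exact no_dup6 v u a b c b (by simp) hcard
  have ncd : c ≠ d := by
    intro h; rw [← h] at hcard; exact no_dup6 v u a b c c (by simp) hcard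
  by_cases hda : r d a
  · have hdb : ¬ r d b := fun h => hd1 (Or.inl ⟨hda, h⟩)
    have hdc : ¬ r d c := fun h => hd1 (Or.inr (Or.inl ⟨hda, h⟩))
    -- ordering u, v, c, a, b, d ; backward edges (d,u), (d,a), (b,c)
    exact key3 r h6 u v c a b d
      (inj6 u v c a b d nvu.symm nuc nua nub nud nvc nva nvb nvd nca nbc.symm
        ncd nab nad nbd)
      hdu hda hbc
      (hT.flip huv) (hT.flip huc) (hT.flip hua) (hT.flip hub)
      (hT.flip hvc) (hT.flip hva) (hT.flip hvb) (hT.flip hvd)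
      (hT.flip hca) hdc
      (hT.flip hab)
      hdb
  · by_cases hdb : r d b
    · have hdc : ¬ r d c := fun h => hd1 (Or.inr (Or.inr ⟨hdb, h⟩))
      -- ordering u, v, a, b, c, d ; backward edges (d,u), (d,b), (c,a)
      exact key3 r h6 u v a b c d
        (inj6 u v a b c d nvu.symm nua nub nuc nud nva nvb nvc nvd nab
          nca.symm nad nbc nbd ncd)
        hdu hdb hca
        (hT.flip huv) (hT.flip hua) (hT.flip hub) (hT.flip huc)
        (hT.flip hva) (hT.flip hvb) (hT.flip hvc) (hT.flip hvd)
        (hT.flip hab) hda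
        (hT.flip hbc)
        hdc
    · by_cases hdc : r d c
      · -- ordering u, v, b, c, a, d ; backward edges (d,u), (d,c), (a,b)
        exact key3 r h6 u v b c a d
          (inj6 u v b c a d nvu.symm nub nuc nua nud nvb nvc nva nvd nbc
            nab.symm nbd nca ncd nad)
          hdu hdc hab
          (hT.flip huv) (hT.flip hub) (hT.flip huc) (hT.flip hua)
          (hT.flip hvb) (hT.flip hvc) (hT.flip hva) (hT.flip hvd)
          (hT.flip hbc) hdb
          (hT.flip hca)
          hda
      · -- d has no outneighbor among a, b, c
        have had : r a d := (hT.2 a d nad).mpr hda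
        have hbd : r b d := (hT.2 b d nbd).mpr hdb
        have hcd : r c d := (hT.2 c d ncd).mpr hdc
        -- ordering u, v, a, b, c, d ; backward edges (d,u), (c,a)
        exact key2 r h6 u v a b c d
          (inj6 u v a b c d nvu.symm nua nub nuc nud nva nvb nvc nvd nab
            nca.symm nad nbc nbd ncd)
          hdu hca
          (hT.flip huv) (hT.flip hua) (hT.flip hub) (hT.flip huc)
          (hT.flip hva) (hT.flip hvb) (hT.flip hvc) (hT.flip hvd)
          (hT.flip hab) hda
          (hT.flip hbc) hdb
          (hT.flip hcd)
end

section
/- Every (c, λ, w)-structure in a tournament T contains a smooth (c/2, 4kλ, w)-structure, where k = |w|: more precisely, if (A_1,...,A_k) is a sequence of disjoint vertex subsets with d(A_i,A_j) ≥ 1 - λ for all i < j, then there exist subsets A_i' ⊆ A_i with |A_i'| ≥ |A_i|/2 such that for all i < j, every vertex v ∈ A_i' has at most 4kλ|A_j'| inneighbors in A_j', and every vertex v ∈ A_j' has at most 4kλ|A_i'| outneighbors in A_i'. -/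
open scoped Classical in
/-- Number of edges directed from `X` to `Y`. -/
noncomputable def eXY {V : Type*} (r : V → V → Prop) (X Y : Finset V) : ℕ :=
  ((X ×ˢ Y).filter (fun p => r p.1 p.2)).card

/-- Directed density from `X` to `Y`. -/
noncomputable def dens {V : Type*} (r : V → V → Prop) (X Y : Finset V) : ℝ :=
  (eXY r X Y : ℝ) / ((X.card : ℝ) * (Y.card : ℝ))

/-!
For `i < j` the density hypothesis bounds the number of backward edges between `A i` and `A j`
by `λ |A i| |A j|`, so by Markov's inequality at most `|A i| / 2k` vertices of `A i` have more than
`2kλ |A j|` backward neighbours in `A j`. Deleting, for every `j ≠ i`, these vertices from `A i`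
removes at most half of `A i`; since every part keeps at least half of its size, the surviving
backward degrees are at most `2kλ |A j| ≤ 4kλ |A' j|`.
-/

open Finset hiding dens
open scoped Classical

section Tournament

variable {V : Type*}

lemma eXY_eq_sum_card_filter_right (r : V → V → Prop) (X Y : Finset V) :
    eXY r X Y = ∑ x ∈ X, #(Y.filter (r x ·)) := by
  simp only [eXY, card_filter, sum_product]

lemma eXY_eq_sum_card_filter_left (r : V → V → Prop) (X Y : Finset V) :
    eXY r X Y = ∑ y ∈ Y, #(X.filter (r · y)) := by
  simp only [eXY_eq_sum_card_filter_right, card_filter]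
  exact sum_comm

lemma IsTournament.eXY_add_eXY {r : V → V → Prop} (hT : IsTournament r) {X Y : Finset V}
    (h : Disjoint X Y) : eXY r X Y + eXY r Y X = #X * #Y := by
  rw [eXY_eq_sum_card_filter_right, eXY_eq_sum_card_filter_left r Y X, ← sum_add_distrib,
    sum_const_nat]
  intro x hx
  rw [← card_filter_add_card_filter_not (s := Y) (p := (r x ·))]
  congr 1
  exact congrArg card <| filter_congr fun y hy =>
    hT.2 y x fun hyx => disjoint_left.mp h hx (hyx ▸ hy)

lemma IsTournament.eXY_le_of_one_sub_le_dens {r : V → V → Prop} (hT : IsTournament r)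
    {X Y : Finset V} (h : Disjoint X Y) {lam : ℝ} (hd : 1 - lam ≤ dens r X Y) :
    (eXY r Y X : ℝ) ≤ lam * #X * #Y := by
  have hsum : (eXY r X Y : ℝ) + eXY r Y X = #X * #Y := by exact_mod_cast hT.eXY_add_eXY h
  have hXY : (0 : ℝ) ≤ eXY r X Y := Nat.cast_nonneg _
  rcases (by positivity : (0 : ℝ) ≤ #X * #Y).eq_or_lt with h0 | hpos
  · rw [mul_assoc, ← h0]
    linarith
  · rw [dens, le_div_iff₀ hpos] at hd
    linarith

end Tournament

lemma card_filter_lt_le_sum_div {V : Type*} {X : Finset V} {f : V → ℝ} (hf : ∀ v ∈ X, 0 ≤ f v)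
    {t : ℝ} (ht : 0 < t) : (#(X.filter (t < f ·)) : ℝ) ≤ (∑ v ∈ X, f v) / t := by
  rw [le_div_iff₀ ht]
  calc (#(X.filter (t < f ·)) : ℝ) * t = ∑ v ∈ X.filter (t < f ·), t := by
        rw [sum_const, nsmul_eq_mul]
    _ ≤ ∑ v ∈ X.filter (t < f ·), f v := sum_le_sum fun v hv => (mem_filter.mp hv).2.le
    _ ≤ ∑ v ∈ X, f v :=
        sum_le_sum_of_subset_of_nonneg (filter_subset _ _) fun v hv _ => hf v hv

lemma half_card_le_card_filter_forall {V ι : Type*} [Fintype ι] (X : Finset V)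
    (P : ι → V → Prop) (h : ∀ j, (#(X.filter (¬ P j ·)) : ℝ) ≤ #X / (2 * Fintype.card ι)) :
    (#X : ℝ) / 2 ≤ #(X.filter fun v => ∀ j, P j v) := by
  have hcover : X.filter (fun v => ¬ ∀ j, P j v) ⊆ univ.biUnion fun j => X.filter (¬ P j ·) := by
    intro v
    simp only [mem_filter, mem_biUnion, mem_univ, true_and, not_forall]
    rintro ⟨hv, j, hj⟩
    exact ⟨j, hv, hj⟩
  have hbad : (#(X.filter fun v => ¬ ∀ j, P j v) : ℝ) ≤ #X / 2 :=
    calc (#(X.filter fun v => ¬ ∀ j, P j v) : ℝ) ≤ ∑ j, (#(X.filter (¬ P j ·)) : ℝ) := by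
          exact_mod_cast (card_le_card hcover).trans card_biUnion_le
      _ ≤ ∑ _j : ι, (#X : ℝ) / (2 * Fintype.card ι) := sum_le_sum fun j _ => h j
      _ = Fintype.card ι * (#X / (2 * Fintype.card ι)) := by
          rw [sum_const, nsmul_eq_mul, card_univ]
      _ ≤ #X / 2 := by
          rcases eq_or_ne (Fintype.card ι : ℝ) 0 with h0 | h0
          · rw [h0, zero_mul]
            positivity
          · exact le_of_eq (by field_simp)
  have hsplit := card_filter_add_card_filter_not (s := X) (p := fun v => ∀ j, P j v)
  have hsplitR : (#(X.filter fun v => ∀ j, P j v) : ℝ) + #(X.filter fun v => ¬ ∀ j, P j v)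
      = #X := by exact_mod_cast hsplit
  linarith

section Parts

variable {V ι : Type*} [LinearOrder ι] (r : V → V → Prop) (A : ι → Finset V)

/-- For `v ∈ A i`, the number of its neighbours in `A j` joined to it against the order of the
parts: in-neighbours if `i < j`, out-neighbours otherwise. -/
noncomputable def backDeg (i j : ι) (v : V) : ℕ :=
  if i < j then #((A j).filter (r · v)) else #((A j).filter (r v ·))

noncomputable def pruned (t : ℝ) (i : ι) : Finset V :=
  (A i).filter fun v => ∀ j, j ≠ i → (backDeg r A i j v : ℝ) ≤ t * #(A j)

variable {r A}

lemma pruned_subset (t : ℝ) (i : ι) : pruned r A t i ⊆ A i := filter_subset _ _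

lemma backDeg_le_of_mem_pruned {t : ℝ} {i j : ι} {v : V} (hv : v ∈ pruned r A t i) (hji : j ≠ i) :
    (backDeg r A i j v : ℝ) ≤ t * #(A j) :=
  (mem_filter.mp hv).2 j hji

lemma backDeg_le_card (i j : ι) (v : V) : backDeg r A i j v ≤ #(A j) := by
  unfold backDeg
  split_ifs <;> exact card_filter_le _ _

variable {lam : ℝ} (hT : IsTournament r) (hdisj : ∀ i j, i ≠ j → Disjoint (A i) (A j))
  (hdens : ∀ i j, i < j → 1 - lam ≤ dens r (A i) (A j))
include hT hdisj hdens

lemma sum_backDeg_le {i j : ι} (hij : i ≠ j) :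
    ∑ v ∈ A i, (backDeg r A i j v : ℝ) ≤ lam * #(A i) * #(A j) := by
  rcases hij.lt_or_gt with h | h
  · have hsum : ∑ v ∈ A i, (backDeg r A i j v : ℝ) = eXY r (A j) (A i) := by
      simp only [backDeg, if_pos h, eXY_eq_sum_card_filter_left, Nat.cast_sum]
    rw [hsum]
    exact hT.eXY_le_of_one_sub_le_dens (hdisj i j hij) (hdens i j h)
  · have hsum : ∑ v ∈ A i, (backDeg r A i j v : ℝ) = eXY r (A i) (A j) := by
      simp only [backDeg, if_neg h.not_gt, eXY_eq_sum_card_filter_right, Nat.cast_sum]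
    rw [hsum, mul_right_comm]
    exact hT.eXY_le_of_one_sub_le_dens (hdisj j i hij.symm) (hdens j i h)

lemma card_filter_lt_backDeg_le {c : ℝ} (hc : 0 < c) (hlam : 0 < lam) {i j : ι} (hij : i ≠ j) :
    (#((A i).filter fun v => c * lam * #(A j) < backDeg r A i j v) : ℝ) ≤ #(A i) / c := by
  rcases (Nat.zero_le #(A j)).eq_or_lt with hj | hj
  · have hdeg (v : V) : backDeg r A i j v = 0 := Nat.le_zero.mp (hj ▸ backDeg_le_card i j v)
    simp only [← hj, hdeg, mul_zero, lt_self_iff_false, filter_false, card_empty,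
      CharP.cast_eq_zero]
    positivity
  have ht : 0 < c * lam * #(A j) := by positivity
  calc (#((A i).filter fun v => c * lam * #(A j) < backDeg r A i j v) : ℝ)
      ≤ (∑ v ∈ A i, (backDeg r A i j v : ℝ)) / (c * lam * #(A j)) :=
        card_filter_lt_le_sum_div (fun _ _ => Nat.cast_nonneg _) ht
    _ ≤ lam * #(A i) * #(A j) / (c * lam * #(A j)) :=
        div_le_div_of_nonneg_right (sum_backDeg_le hT hdisj hdens hij) ht.le
    _ = #(A i) / c := by field_simp

lemma half_card_le_card_pruned [Fintype ι] (hlam : 0 < lam) (i : ι) :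
    (#(A i) : ℝ) / 2 ≤ #(pruned r A (2 * Fintype.card ι * lam) i) := by
  have hc : (0 : ℝ) < 2 * Fintype.card ι := by
    have : 0 < Fintype.card ι := Fintype.card_pos_iff.mpr ⟨i⟩
    positivity
  unfold pruned
  convert half_card_le_card_filter_forall (A i)
    (fun j v => j ≠ i → (backDeg r A i j v : ℝ) ≤ 2 * Fintype.card ι * lam * #(A j)) ?_
  intro j
  by_cases hji : j = i
  · simp only [hji, ne_eq, not_true_eq_false, IsEmpty.forall_iff, filter_false, card_empty,
      CharP.cast_eq_zero]
    positivity
  · simpa only [ne_eq, hji, not_false_eq_true, forall_const, not_le] using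
      card_filter_lt_backDeg_le hT hdisj hdens hc hlam (Ne.symm hji)

end Parts

lemma card_filter_le_two_mul_of_half_le {V : Type*} {X X' : Finset V} (p : V → Prop)
    (hsub : X' ⊆ X) (hhalf : (#X : ℝ) / 2 ≤ #X') {t : ℝ} (ht : 0 ≤ t)
    (h : (#(X.filter p) : ℝ) ≤ t * #X) : (#(X'.filter p) : ℝ) ≤ 2 * t * #X' :=
  calc (#(X'.filter p) : ℝ) ≤ #(X.filter p) := by
        exact_mod_cast card_le_card (filter_subset_filter p hsub)
    _ ≤ t * #X := h
    _ ≤ 2 * t * #X' := by nlinarith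

open scoped Classical in
theorem stmt15_general {V : Type} (r : V → V → Prop) (hT : IsTournament r)
    (k : ℕ) (A : Fin k → Finset V) (lam : ℝ) (hlam : 0 < lam)
    (hdisj : ∀ i j : Fin k, i ≠ j → Disjoint (A i) (A j))
    (hdens : ∀ i j : Fin k, i < j → 1 - lam ≤ dens r (A i) (A j)) :
    ∃ A' : Fin k → Finset V,
      (∀ i, A' i ⊆ A i ∧ ((A i).card : ℝ) / 2 ≤ ((A' i).card : ℝ)) ∧
      ∀ i j : Fin k, i < j →
        (∀ v ∈ A' i,
          ((((A' j).filter (fun w => r w v)).card : ℝ) ≤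
            4 * k * lam * ((A' j).card : ℝ))) ∧
        (∀ v ∈ A' j,
          ((((A' i).filter (fun w => r v w)).card : ℝ) ≤
            4 * k * lam * ((A' i).card : ℝ))) := by
  have hhalf := half_card_le_card_pruned hT hdisj hdens hlam
  rw [Fintype.card_fin] at hhalf
  have ht : (0 : ℝ) ≤ 2 * k * lam := by positivity
  refine ⟨pruned r A (2 * k * lam), fun i => ⟨pruned_subset _ i, hhalf i⟩,
    fun i j hij => ⟨fun v hv => ?_, fun v hv => ?_⟩⟩
  · have hdeg := backDeg_le_of_mem_pruned hv hij.ne'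
    rw [backDeg, if_pos hij] at hdeg
    exact (card_filter_le_two_mul_of_half_le _ (pruned_subset _ _) (hhalf j) ht hdeg).trans_eq
      (by ring)
  · have hdeg := backDeg_le_of_mem_pruned hv hij.ne
    rw [backDeg, if_neg hij.not_gt] at hdeg
    exact (card_filter_le_two_mul_of_half_le _ (pruned_subset _ _) (hhalf i) ht hdeg).trans_eq
      (by ring)

open scoped Classical in
theorem stmt15 {V : Type} [Fintype V] (r : V → V → Prop) (hT : IsTournament r)
    (k : ℕ) (A : Fin k → Finset V) (lam : ℝ) (hlam : 0 < lam)
    (hdisj : ∀ i j : Fin k, i ≠ j → Disjoint (A i) (A j))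
    (hdens : ∀ i j : Fin k, i < j → 1 - lam ≤ dens r (A i) (A j)) :
    ∃ A' : Fin k → Finset V,
      (∀ i, A' i ⊆ A i ∧ ((A i).card : ℝ) / 2 ≤ ((A' i).card : ℝ)) ∧
      ∀ i j : Fin k, i < j →
        (∀ v ∈ A' i,
          ((((A' j).filter (fun w => r w v)).card : ℝ) ≤
            4 * k * lam * ((A' j).card : ℝ))) ∧
        (∀ v ∈ A' j,
          ((((A' i).filter (fun w => r v w)).card : ℝ) ≤
            4 * k * lam * ((A' i).card : ℝ))) :=
  stmt15_general r hT k A lam hlam hdisj hdens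
end
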